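/- Let α, β₁, β₂ > 0 with α ≥ β₂. Then for all z > 0, ₁F₂(α; β₁+1, β₂; z)/₁F₂(α; β₁, β₂; z) + [₁F₂(α; β₁+1, β₂; z)]^{1/β₁} ≥ 2. -/

import Mathlib

/-!
Write `g = ₁F₂(α; β₁ + 1, β₂; ·)` and `f = ₁F₂(α; β₁, β₂; ·)`; comparing coefficients,
`f = g + z g' / β₁`. The coefficients of `g` are `c n / n!` with
`c n = (α)ₙ / ((β₁ + 1)ₙ (β₂)ₙ)`, and `c (n + 1) / c n = (α + n) / ((β₁ + 1 + n) (β₂ + n))`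
decreases in `n` because `β₂ ≤ α`. For such a log-concave `c`, the coefficients of the Cauchy
products `g g''` and `g' ^ 2` compare by a weighted Chebyshev inequality on each antidiagonal
(weights `1 / (i! j!)`), so `g g'' ≤ g' ^ 2` on `[0, ∞)` and `log g` is concave there.
As `g 0 = 1`, concavity gives `z g' / g ≤ log g`, hence
`f / g = 1 + z g' / (β₁ g) ≤ 1 + log g / β₁ ≤ g ^ (1 / β₁)` (the Lazarević-type inequality),
and the theorem follows from `g / f + f / g ≥ 2`.
-/

open Finset Real
open scoped Nat

theorem MonovaryOn.sum_mul_sum_le_sum_mul_sum {ι : Type*} {s : Finset ι} {w f g : ι → ℝ}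
    (hfg : MonovaryOn f g s) (hw : ∀ i ∈ s, 0 ≤ w i) :
    (∑ i ∈ s, w i * f i) * (∑ i ∈ s, w i * g i) ≤ (∑ i ∈ s, w i) * ∑ i ∈ s, w i * (f i * g i) := by
  have hpairs : 0 ≤ ∑ i ∈ s, ∑ j ∈ s, w i * w j * ((f j - f i) * (g j - g i)) :=
    sum_nonneg fun i hi => sum_nonneg fun j hj =>
      mul_nonneg (mul_nonneg (hw i hi) (hw j hj)) (hfg.sub_mul_sub_nonneg hi hj)
  have hexpand : ∑ i ∈ s, ∑ j ∈ s, w i * w j * ((f j - f i) * (g j - g i)) =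
      2 * ((∑ i ∈ s, w i) * ∑ i ∈ s, w i * (f i * g i) -
        (∑ i ∈ s, w i * f i) * (∑ i ∈ s, w i * g i)) := by
    have hterm : ∀ i j, w i * w j * ((f j - f i) * (g j - g i)) =
        w i * (w j * (f j * g j)) + w j * (w i * (f i * g i)) - w i * g i * (w j * f j) -
          w i * f i * (w j * g j) := fun i j => by ring
    simp only [hterm, sum_add_distrib, sum_sub_distrib, ← mul_sum, ← sum_mul]
    ring
  linarith

theorem sum_antidiagonal_inv_factorial_mul (M : ℕ) :
    ∑ p ∈ antidiagonal M, ((p.1 ! : ℝ) * p.2 !)⁻¹ = 2 ^ M / M ! := by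
  have hchoose : ∀ p ∈ antidiagonal M, ((p.1 ! : ℝ) * p.2 !)⁻¹ = (M.choose p.1 : ℝ) / M ! := by
    intro p hp
    rw [HasAntidiagonal.mem_antidiagonal] at hp
    rw [← hp, Nat.cast_add_choose, div_div_cancel_left' (by positivity)]
  rw [sum_congr rfl hchoose, ← sum_div,
    Nat.sum_antidiagonal_eq_sum_range_succ (fun i _ => (M.choose i : ℝ)), ← Nat.cast_sum,
    Nat.sum_range_choose, Nat.cast_pow, Nat.cast_ofNat]

theorem sum_antidiagonal_inv_factorial_mul_mul (m : ℕ) :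
    ∑ p ∈ antidiagonal (m + 2), ((p.1 ! : ℝ) * p.2 !)⁻¹ * (p.1 * p.2) =
      ∑ p ∈ antidiagonal m, ((p.1 ! : ℝ) * p.2 !)⁻¹ := by
  rw [Nat.sum_antidiagonal_succ, Nat.sum_antidiagonal_succ']
  simp only [Nat.cast_zero, zero_mul, zero_add, mul_zero]
  refine sum_congr rfl fun p _ => ?_
  push_cast [Nat.factorial_succ]
  field_simp

/-- For a positive sequence this says that `c (n + 1) / c n` is antitone, i.e. that `c` is
log-concave. -/
def IsLogConcaveSeq (c : ℕ → ℝ) : Prop :=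
  ∀ m n, m ≤ n → c m * c (n + 1) ≤ c (m + 1) * c n

namespace IsLogConcaveSeq

variable {c : ℕ → ℝ}

theorem mul_le_mul_of_add_eq (hc : IsLogConcaveSeq c) {a b a' b' : ℕ} (haa' : a ≤ a')
    (hab' : a' ≤ b') (hsum : a + b = a' + b') : c a * c b ≤ c a' * c b' := by
  obtain ⟨d, rfl⟩ := Nat.exists_eq_add_of_le haa'
  obtain rfl : b = b' + d := by omega
  clear hsum haa'
  induction d generalizing b' with
  | zero => rfl
  | succ d ih =>
    calc c a * c (b' + (d + 1)) = c a * c (b' + 1 + d) := by rw [add_comm d 1, add_assoc]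
      _ ≤ c (a + d) * c (b' + 1) := ih (b' := b' + 1) (by omega)
      _ ≤ c (a + (d + 1)) * c b' := hc _ _ (by omega)

theorem monovaryOn_antidiagonal (hc : IsLogConcaveSeq c) (M : ℕ) :
    MonovaryOn (fun p : ℕ × ℕ => c p.1 * c p.2) (fun p => (p.1 * p.2 : ℝ)) (antidiagonal M) := by
  have hsymm : ∀ p : ℕ × ℕ, c p.1 * c p.2 = c (min p.1 p.2) * c (max p.1 p.2) ∧
      (p.1 * p.2 : ℝ) = (min p.1 p.2 : ℕ) * (max p.1 p.2 : ℕ) := by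
    rintro ⟨i, j⟩
    rcases le_total i j with h | h
    · simp [h]
    · simp [h, mul_comm]
  intro p hp q hq hlt
  dsimp only at hlt ⊢
  rw [mem_coe, HasAntidiagonal.mem_antidiagonal] at hp hq
  rw [(hsymm p).1, (hsymm q).1]
  rw [(hsymm p).2, (hsymm q).2] at hlt
  have hpq : min p.1 p.2 + max p.1 p.2 = min q.1 q.2 + max q.1 q.2 := by
    rw [min_add_max, min_add_max, hp, hq]
  have hp' := min_le_max (a := p.1) (b := p.2)
  have hq' := min_le_max (a := q.1) (b := q.2)
  generalize min p.1 p.2 = a, max p.1 p.2 = b, min q.1 q.2 = a', max q.1 q.2 = b' at *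
  have hmin : a ≤ a' := by
    by_contra! h
    have : a' * b' < a * b := by nlinarith
    exact absurd hlt (not_lt.2 (by exact_mod_cast this.le))
  exact hc.mul_le_mul_of_add_eq hmin hq' hpq

theorem mul_sum_antidiagonal_le (hc : IsLogConcaveSeq c) (m : ℕ) :
    (m + 1 : ℝ) * (m + 2) * ∑ p ∈ antidiagonal (m + 2), c p.1 / p.1 ! * (c p.2 / p.2 !) ≤
      4 * ∑ p ∈ antidiagonal (m + 2), c p.1 / p.1 ! * (c p.2 / p.2 !) * (p.1 * p.2) := by
  have h := (hc.monovaryOn_antidiagonal (m + 2)).sum_mul_sum_le_sum_mul_sum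
    (w := fun p => ((p.1 ! : ℝ) * p.2 !)⁻¹) fun p _ => by positivity
  rw [sum_antidiagonal_inv_factorial_mul_mul, sum_antidiagonal_inv_factorial_mul,
    sum_antidiagonal_inv_factorial_mul] at h
  have hterm : ∀ p : ℕ × ℕ,
      ((p.1 ! : ℝ) * p.2 !)⁻¹ * (c p.1 * c p.2) = c p.1 / p.1 ! * (c p.2 / p.2 !) :=
    fun p => by ring
  have hterm' : ∀ (p : ℕ × ℕ) (X : ℝ),
      ((p.1 ! : ℝ) * p.2 !)⁻¹ * (c p.1 * c p.2 * X) = c p.1 / p.1 ! * (c p.2 / p.2 !) * X :=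
    fun p X => by ring
  simp only [hterm', hterm] at h
  have hW : (2 : ℝ) ^ (m + 2) / (m + 2)! = 4 / ((m + 1) * (m + 2)) * (2 ^ m / m !) := by
    push_cast [Nat.factorial_succ]
    field_simp
    ring
  rw [hW, mul_right_comm] at h
  have h' := le_of_mul_le_mul_right h (by positivity)
  rwa [div_mul_eq_mul_div, le_div_iff₀ (by positivity), mul_comm] at h'

theorem sum_antidiagonal_mul_sub_one_le (hc : IsLogConcaveSeq c) (m : ℕ) :
    ∑ p ∈ antidiagonal (m + 2), c p.1 / p.1 ! * (c p.2 / p.2 !) * (p.2 * (p.2 - 1)) ≤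
      ∑ p ∈ antidiagonal (m + 2), c p.1 / p.1 ! * (c p.2 / p.2 !) * (p.1 * p.2) := by
  set b : ℕ × ℕ → ℝ := fun p => c p.1 / p.1 ! * (c p.2 / p.2 !) with hb
  have hswap : ∑ p ∈ antidiagonal (m + 2), b p * (p.2 * (p.2 - 1)) =
      ∑ p ∈ antidiagonal (m + 2), b p * (p.1 * (p.1 - 1)) := by
    rw [← Nat.sum_antidiagonal_swap]
    refine sum_congr rfl fun p _ => ?_
    simp only [hb, Prod.fst_swap, Prod.snd_swap]
    ring
  have hsymm : 2 * ∑ p ∈ antidiagonal (m + 2), b p * (p.2 * (p.2 - 1)) =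
      (m + 1) * (m + 2) * ∑ p ∈ antidiagonal (m + 2), b p -
        2 * ∑ p ∈ antidiagonal (m + 2), b p * (p.1 * p.2) := by
    nth_rewrite 1 [two_mul, hswap]
    rw [← sum_add_distrib, mul_sum, mul_sum, ← sum_sub_distrib]
    refine sum_congr rfl fun p hp => ?_
    have hp' : (p.1 : ℝ) + p.2 = m + 2 := by
      exact_mod_cast HasAntidiagonal.mem_antidiagonal.1 hp
    linear_combination (b p * (p.1 + p.2 + m + 1 : ℝ)) * hp'
  linarith [hc.mul_sum_antidiagonal_le m]

end IsLogConcaveSeq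

def derivCoeff (a : ℕ → ℝ) (n : ℕ) : ℝ := (n + 1) * a (n + 1)

section PowerSeries

variable {a b : ℕ → ℝ}

theorem summable_norm_mul_pow (ha : ∀ r : ℝ, Summable fun n => ‖a n‖ * r ^ n) (y : ℝ) :
    Summable fun n => ‖a n * y ^ n‖ := by
  simpa only [norm_mul, norm_pow, Real.norm_eq_abs, abs_abs] using ha |y|

theorem summable_norm_derivCoeff_mul_pow (ha : ∀ r : ℝ, Summable fun n => ‖a n‖ * r ^ n)
    (r : ℝ) : Summable fun n => ‖derivCoeff a n‖ * r ^ n := by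
  refine Summable.of_norm_bounded ((summable_nat_add_iff 1).2 (ha (2 * (|r| + 1)))) fun n => ?_
  have hn : (n + 1 : ℝ) ≤ 2 ^ (n + 1) := by exact_mod_cast Nat.lt_two_pow_self.le
  have hr : |r| ^ n ≤ (|r| + 1) ^ (n + 1) :=
    (pow_le_pow_left₀ (abs_nonneg r) (by linarith) n).trans
      (pow_le_pow_right₀ (by linarith [abs_nonneg r]) n.le_succ)
  simp only [derivCoeff, Real.norm_eq_abs, abs_mul, abs_abs, abs_pow,
    abs_of_nonneg (by positivity : (0 : ℝ) ≤ n + 1), mul_pow]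
  calc (n + 1 : ℝ) * |a (n + 1)| * |r| ^ n ≤ 2 ^ (n + 1) * |a (n + 1)| * (|r| + 1) ^ (n + 1) := by
        gcongr
    _ = _ := by ring

theorem hasDerivAt_tsum_mul_pow (ha : ∀ r : ℝ, Summable fun n => ‖a n‖ * r ^ n) (y : ℝ) :
    HasDerivAt (fun x => ∑' n, a n * x ^ n) (∑' n, derivCoeff a n * y ^ n) y := by
  have hshift : ∀ x : ℝ, (fun n => a (n + 1) * ((n + 1 : ℕ) * x ^ (n + 1 - 1))) =
      fun n => derivCoeff a n * x ^ n := fun x => by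
    ext n
    simp only [derivCoeff, Nat.add_sub_cancel, Nat.cast_succ]
    ring
  have htsum : ∑' n, a n * (n * y ^ (n - 1)) = ∑' n, derivCoeff a n * y ^ n := by
    have hsum : Summable fun n => a n * (n * y ^ (n - 1)) := (summable_nat_add_iff 1).1 (by
      rw [hshift]; exact (summable_norm_mul_pow (summable_norm_derivCoeff_mul_pow ha) y).of_norm)
    rw [hsum.tsum_eq_zero_add, hshift]
    simp
  set R := |y| + 1
  rw [← htsum]
  refine hasDerivAt_tsum_of_isPreconnected (u := fun n => ‖a n‖ * (n * R ^ (n - 1)))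
    ((summable_nat_add_iff 1).1 ?_) isOpen_Ioo (convex_Ioo (-R) R).isPreconnected
    (fun n x _ => (hasDerivAt_pow n x).const_mul (a n)) (fun n x hx => ?_) (y₀ := 0)
    (by simp only [Set.mem_Ioo]; constructor <;> linarith [abs_nonneg y])
    ((summable_norm_mul_pow ha 0).of_norm) ?_
  · refine (summable_norm_derivCoeff_mul_pow ha R).congr fun n => ?_
    simp only [derivCoeff, norm_mul, Nat.add_sub_cancel, Nat.cast_succ,
      Real.norm_of_nonneg (by positivity : (0 : ℝ) ≤ n + 1)]
    ring
  · rw [norm_mul, norm_mul, norm_pow, Real.norm_natCast]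
    gcongr
    exact abs_le.2 ⟨hx.1.le, hx.2.le⟩
  · simp only [Set.mem_Ioo]
    constructor <;> linarith [neg_abs_le y, le_abs_self y]

theorem hasSum_natCast_mul_mul_pow (ha : ∀ r : ℝ, Summable fun n => ‖a n‖ * r ^ n) (y : ℝ) :
    HasSum (fun n => n * a n * y ^ n) (y * ∑' n, derivCoeff a n * y ^ n) := by
  refine (hasSum_nat_add_iff' 1).1 ?_
  simpa [derivCoeff, pow_succ, mul_comm, mul_left_comm, mul_assoc] using
    (summable_norm_mul_pow (summable_norm_derivCoeff_mul_pow ha) y).of_norm.hasSum.mul_left y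

theorem hasSum_sum_antidiagonal_mul_pow (ha : ∀ r : ℝ, Summable fun n => ‖a n‖ * r ^ n)
    (hb : ∀ r : ℝ, Summable fun n => ‖b n‖ * r ^ n) (y : ℝ) :
    HasSum (fun m => (∑ p ∈ antidiagonal m, a p.1 * b p.2) * y ^ m)
      ((∑' n, a n * y ^ n) * ∑' n, b n * y ^ n) := by
  have hterm : ∀ m, ∑ p ∈ antidiagonal m, a p.1 * y ^ p.1 * (b p.2 * y ^ p.2) =
      (∑ p ∈ antidiagonal m, a p.1 * b p.2) * y ^ m := fun m => by
    rw [sum_mul]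
    refine sum_congr rfl fun p hp => ?_
    rw [← HasAntidiagonal.mem_antidiagonal.1 hp, pow_add]
    ring
  have hcauchy := (summable_norm_sum_mul_antidiagonal_of_summable_norm
    (summable_norm_mul_pow ha y) (summable_norm_mul_pow hb y)).of_norm.hasSum
  rw [← tsum_mul_tsum_eq_tsum_sum_antidiagonal_of_summable_norm (summable_norm_mul_pow ha y)
    (summable_norm_mul_pow hb y)] at hcauchy
  simpa only [hterm] using hcauchy

end PowerSeries

theorem sum_antidiagonal_mul_derivCoeff_derivCoeff (b : ℕ → ℝ) (m : ℕ) :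
    ∑ p ∈ antidiagonal m, b p.1 * derivCoeff (derivCoeff b) p.2 =
      ∑ p ∈ antidiagonal (m + 2), b p.1 * b p.2 * (p.2 * (p.2 - 1)) := by
  rw [Nat.sum_antidiagonal_succ', Nat.sum_antidiagonal_succ']
  simp only [Nat.cast_zero, Nat.cast_one, zero_mul, mul_zero, sub_self, zero_add]
  refine sum_congr rfl fun p _ => ?_
  simp only [derivCoeff, Nat.cast_add, Nat.cast_one]
  ring

theorem sum_antidiagonal_derivCoeff_mul_derivCoeff (b : ℕ → ℝ) (m : ℕ) :
    ∑ p ∈ antidiagonal m, derivCoeff b p.1 * derivCoeff b p.2 =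
      ∑ p ∈ antidiagonal (m + 2), b p.1 * b p.2 * (p.1 * p.2) := by
  rw [Nat.sum_antidiagonal_succ, Nat.sum_antidiagonal_succ']
  simp only [Nat.cast_zero, zero_mul, mul_zero, zero_add]
  refine sum_congr rfl fun p _ => ?_
  simp only [derivCoeff, Nat.cast_add, Nat.cast_one]
  ring

theorem IsLogConcaveSeq.tsum_mul_tsum_derivCoeff_derivCoeff_le_sq {b c : ℕ → ℝ}
    (hc : IsLogConcaveSeq c) (hbc : ∀ n, b n = c n / n !)
    (hb : ∀ r : ℝ, Summable fun n => ‖b n‖ * r ^ n) {y : ℝ} (hy : 0 ≤ y) :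
    (∑' n, b n * y ^ n) * (∑' n, derivCoeff (derivCoeff b) n * y ^ n) ≤
      (∑' n, derivCoeff b n * y ^ n) ^ 2 := by
  have hb' := summable_norm_derivCoeff_mul_pow hb
  rw [sq]
  refine hasSum_le (fun m => mul_le_mul_of_nonneg_right ?_ (pow_nonneg hy m))
    (hasSum_sum_antidiagonal_mul_pow hb (summable_norm_derivCoeff_mul_pow hb') y)
    (hasSum_sum_antidiagonal_mul_pow hb' hb' y)
  rw [sum_antidiagonal_mul_derivCoeff_derivCoeff, sum_antidiagonal_derivCoeff_mul_derivCoeff]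
  simp only [hbc]
  exact hc.sum_antidiagonal_mul_sub_one_le m

theorem ConcaveOn.sub_mul_le_of_hasDerivAt {S : Set ℝ} {f : ℝ → ℝ} {x y d : ℝ}
    (hf : ConcaveOn ℝ S f) (hx : x ∈ S) (hy : y ∈ S) (hxy : x < y) (hd : HasDerivAt f d y) :
    (y - x) * d ≤ f y - f x := by
  have h := hf.neg.slope_le_of_hasDerivAt hx hy hxy hd.neg
  rw [slope_def_field, div_le_iff₀ (sub_pos.2 hxy)] at h
  simp only [Pi.neg_apply] at h
  linarith

theorem concaveOn_log_of_mul_le_sq {g g' g'' : ℝ → ℝ}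
    (hg : ∀ x, 0 ≤ x → HasDerivAt g (g' x) x) (hg' : ∀ x, 0 < x → HasDerivAt g' (g'' x) x)
    (hpos : ∀ x, 0 ≤ x → 0 < g x) (hlc : ∀ x, 0 < x → g x * g'' x ≤ g' x ^ 2) :
    ConcaveOn ℝ (Set.Ici 0) fun x => log (g x) := by
  refine concaveOn_of_hasDerivWithinAt2_nonpos (f' := fun x => g' x / g x)
    (f'' := fun x => (g'' x * g x - g' x * g' x) / g x ^ 2) (convex_Ici 0)
    (fun x hx => ((hg x hx).log (hpos x hx).ne').continuousAt.continuousWithinAt)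
    (fun x hx => ?_) (fun x hx => ?_) (fun x hx => ?_) <;> rw [interior_Ici] at hx
  · exact ((hg x hx.le).log (hpos x hx.le).ne').hasDerivWithinAt
  · exact ((hg' x hx).div (hg x hx.le) (hpos x hx.le).ne').hasDerivWithinAt
  · exact div_nonpos_of_nonpos_of_nonneg (by nlinarith [hlc x hx]) (sq_nonneg _)

theorem mul_div_le_log_of_mul_le_sq {g g' g'' : ℝ → ℝ}
    (hg : ∀ x, 0 ≤ x → HasDerivAt g (g' x) x) (hg' : ∀ x, 0 < x → HasDerivAt g' (g'' x) x)
    (hpos : ∀ x, 0 ≤ x → 0 < g x) (hlc : ∀ x, 0 < x → g x * g'' x ≤ g' x ^ 2) (hg0 : g 0 = 1)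
    {y : ℝ} (hy : 0 < y) : y * (g' y / g y) ≤ log (g y) := by
  have h := (concaveOn_log_of_mul_le_sq hg hg' hpos hlc).sub_mul_le_of_hasDerivAt
    Set.self_mem_Ici (Set.mem_Ici.2 hy.le) hy ((hg y hy.le).log (hpos y hy.le).ne')
  simpa [hg0] using h

noncomputable def pochhammerRatio (α β γ : ℝ) (n : ℕ) : ℝ :=
  (∏ i ∈ range n, (α + i)) / ((∏ i ∈ range n, (β + i)) * ∏ i ∈ range n, (γ + i))

noncomputable def hyp1F2Coeff (α β γ : ℝ) (n : ℕ) : ℝ := pochhammerRatio α β γ n / n !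

noncomputable def hyp1F2 (α β γ z : ℝ) : ℝ := ∑' n, hyp1F2Coeff α β γ n * z ^ n

theorem tsum_eq_hyp1F2 (α β γ z : ℝ) :
    ∑' k : ℕ, (∏ i ∈ range k, (α + i)) * z ^ k /
      ((∏ i ∈ range k, (β + i)) * (∏ i ∈ range k, (γ + i)) * k !) = hyp1F2 α β γ z :=
  tsum_congr fun k => by rw [hyp1F2Coeff, pochhammerRatio]; ring

section Hypergeometric

variable {α β γ : ℝ}

theorem pochhammerRatio_succ (n : ℕ) :
    pochhammerRatio α β γ (n + 1) =
      pochhammerRatio α β γ n * ((α + n) / ((β + n) * (γ + n))) := by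
  simp only [pochhammerRatio, prod_range_succ]
  rw [mul_mul_mul_comm, mul_div_mul_comm]

theorem pochhammerRatio_nonneg (hα : 0 ≤ α) (hβ : 0 < β) (hγ : 0 < γ) (n : ℕ) :
    0 ≤ pochhammerRatio α β γ n := by
  unfold pochhammerRatio
  positivity

theorem pochhammerRatio_eq_mul_one_add (hβ : 0 < β) (n : ℕ) :
    pochhammerRatio α β γ n = pochhammerRatio α (β + 1) γ n * (1 + n / β) := by
  have hshift : (∏ i ∈ range n, (β + i)) * (β + n) = β * ∏ i ∈ range n, (β + 1 + i) := by
    rw [← prod_range_succ, prod_range_succ', mul_comm]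
    push_cast
    simp only [add_zero, add_assoc, add_comm (1 : ℝ)]
  have hprod : 0 < ∏ i ∈ range n, (β + i) := prod_pos fun i _ => by positivity
  have hprod' : 0 < ∏ i ∈ range n, (β + 1 + i) := prod_pos fun i _ => by positivity
  unfold pochhammerRatio
  calc (∏ i ∈ range n, (α + i)) / ((∏ i ∈ range n, (β + i)) * ∏ i ∈ range n, (γ + i))
      = (∏ i ∈ range n, (α + i)) * (∏ i ∈ range n, (γ + i))⁻¹ * (∏ i ∈ range n, (β + i))⁻¹ := by
        ring
    _ = (∏ i ∈ range n, (α + i)) * (∏ i ∈ range n, (γ + i))⁻¹ *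
          ((∏ i ∈ range n, (β + 1 + i))⁻¹ * (1 + n / β)) := by
        congr 1
        field_simp
        linear_combination -hshift
    _ = _ := by ring

theorem isLogConcaveSeq_pochhammerRatio (hβ : 0 < β) (hγ : 0 < γ) (hγα : γ ≤ α) :
    IsLogConcaveSeq (pochhammerRatio α β γ) := by
  intro m n hmn
  have hα : 0 < α := hγ.trans_le hγα
  have hmn' : (m : ℝ) ≤ n := by exact_mod_cast hmn
  have hratio : (α + n) / ((β + n) * (γ + n)) ≤ (α + m) / ((β + m) * (γ + m)) := by
    rw [div_le_div_iff₀ (by positivity) (by positivity)]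
    have h1 : (α + n) * (γ + m) ≤ (α + m) * (γ + n) := by nlinarith
    calc (α + n) * ((β + m) * (γ + m)) = (α + n) * (γ + m) * (β + m) := by ring
      _ ≤ (α + m) * (γ + n) * (β + n) := by gcongr
      _ = (α + m) * ((β + n) * (γ + n)) := by ring
  have := pochhammerRatio_nonneg hα.le hβ hγ m
  have := pochhammerRatio_nonneg hα.le hβ hγ n
  rw [pochhammerRatio_succ, pochhammerRatio_succ]
  calc pochhammerRatio α β γ m * (pochhammerRatio α β γ n * ((α + n) / ((β + n) * (γ + n))))
      ≤ pochhammerRatio α β γ m * (pochhammerRatio α β γ n * ((α + m) / ((β + m) * (γ + m)))) := by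
        gcongr
    _ = _ := by ring

theorem pochhammerRatio_le_pow (hα : 0 ≤ α) (hβ : 0 < β) (hγ : 0 < γ) (n : ℕ) :
    pochhammerRatio α β γ n ≤ ((α / γ + 1) / β) ^ n := by
  induction n with
  | zero => simp [pochhammerRatio]
  | succ n ih =>
    have hratio : (α + n) / ((β + n) * (γ + n)) ≤ (α / γ + 1) / β := by
      have hγn : α + n ≤ (α / γ + 1) * (γ + n) := by
        have : (α / γ + 1) * (γ + n) = α + n + (γ + α * n / γ) := by field_simp; ring
        have : 0 ≤ α * n / γ := by positivity
        linarith
      rw [div_le_div_iff₀ (by positivity) hβ]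
      calc (α + n) * β ≤ (α / γ + 1) * (γ + n) * (β + n) := by gcongr; linarith
        _ = _ := by ring
    rw [pochhammerRatio_succ, pow_succ]
    exact mul_le_mul ih hratio (by positivity) (by positivity)

theorem summable_norm_hyp1F2Coeff_mul_pow (hα : 0 ≤ α) (hβ : 0 < β) (hγ : 0 < γ) (r : ℝ) :
    Summable fun n => ‖hyp1F2Coeff α β γ n‖ * r ^ n := by
  refine (Real.summable_pow_div_factorial ((α / γ + 1) / β * |r|)).of_norm_bounded fun n => ?_
  rw [norm_mul, norm_norm, norm_pow, Real.norm_eq_abs r, hyp1F2Coeff, Real.norm_of_nonneg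
    (div_nonneg (pochhammerRatio_nonneg hα hβ hγ n) (Nat.cast_nonneg _)), div_mul_eq_mul_div,
    mul_pow]
  gcongr
  exact pochhammerRatio_le_pow hα hβ hγ n

theorem hyp1F2_pos (hα : 0 ≤ α) (hβ : 0 < β) (hγ : 0 < γ) {y : ℝ} (hy : 0 ≤ y) :
    0 < hyp1F2 α β γ y :=
  (summable_norm_mul_pow (summable_norm_hyp1F2Coeff_mul_pow hα hβ hγ) y).of_norm.tsum_pos
    (fun n => mul_nonneg (div_nonneg (pochhammerRatio_nonneg hα hβ hγ n) (Nat.cast_nonneg _))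
      (pow_nonneg hy n)) 0 (by simp [hyp1F2Coeff, pochhammerRatio])

theorem hyp1F2_zero : hyp1F2 α β γ 0 = 1 := by
  rw [hyp1F2, tsum_eq_single 0 fun n hn => by simp [hn]]
  simp [hyp1F2Coeff, pochhammerRatio]

theorem hyp1F2_eq_add_mul_tsum_derivCoeff (hα : 0 ≤ α) (hβ : 0 < β) (hγ : 0 < γ) (y : ℝ) :
    hyp1F2 α β γ y = hyp1F2 α (β + 1) γ y +
      y * (∑' n, derivCoeff (hyp1F2Coeff α (β + 1) γ) n * y ^ n) / β := by
  have hb := summable_norm_hyp1F2Coeff_mul_pow hα (by linarith : 0 < β + 1) hγ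
  have hsum := ((summable_norm_mul_pow hb y).of_norm.hasSum).add
    ((hasSum_natCast_mul_mul_pow hb y).div_const β)
  unfold hyp1F2
  rw [← hsum.tsum_eq]
  refine tsum_congr fun n => ?_
  rw [hyp1F2Coeff, hyp1F2Coeff, pochhammerRatio_eq_mul_one_add hβ]
  field_simp

end Hypergeometric

theorem hyp1F2_div_le_rpow {α β γ z : ℝ} (hβ : 0 < β) (hγ : 0 < γ) (hγα : γ ≤ α) (hz : 0 < z) :
    hyp1F2 α β γ z / hyp1F2 α (β + 1) γ z ≤ hyp1F2 α (β + 1) γ z ^ (1 / β) := by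
  have hα : 0 ≤ α := (hγ.trans_le hγα).le
  have hβ' : 0 < β + 1 := by linarith
  have hb := summable_norm_hyp1F2Coeff_mul_pow hα hβ' hγ
  set G := hyp1F2 α (β + 1) γ z
  set G' := ∑' n, derivCoeff (hyp1F2Coeff α (β + 1) γ) n * z ^ n
  have hG : 0 < G := hyp1F2_pos hα hβ' hγ hz.le
  have hlog : z * (G' / G) ≤ log G :=
    mul_div_le_log_of_mul_le_sq (g := hyp1F2 α (β + 1) γ)
      (fun x _ => hasDerivAt_tsum_mul_pow hb x)
      (fun x _ => hasDerivAt_tsum_mul_pow (summable_norm_derivCoeff_mul_pow hb) x)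
      (fun x hx => hyp1F2_pos hα hβ' hγ hx)
      (fun x hx => (isLogConcaveSeq_pochhammerRatio hβ' hγ hγα)
        |>.tsum_mul_tsum_derivCoeff_derivCoeff_le_sq (fun n => rfl) hb hx.le)
      hyp1F2_zero hz
  rw [hyp1F2_eq_add_mul_tsum_derivCoeff hα hβ hγ, rpow_def_of_pos hG]
  calc (G + z * G' / β) / G = 1 + z * (G' / G) / β := by field_simp
    _ ≤ 1 + log G / β := by gcongr
    _ ≤ exp (log G * (1 / β)) := by rw [mul_one_div, add_comm]; exact add_one_le_exp _

theorem wilker_1F2_general (α β₁ β₂ : ℝ) (hβ₁ : 0 < β₁) (hβ₂ : 0 < β₂)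
    (hαβ : β₂ ≤ α) (z : ℝ) (hz : 0 < z) :
    2 ≤ (∑' k : ℕ, (∏ i ∈ Finset.range k, (α + i)) * z ^ k /
          ((∏ i ∈ Finset.range k, (β₁ + 1 + i)) * (∏ i ∈ Finset.range k, (β₂ + i)) *
            (k.factorial : ℝ))) /
        (∑' k : ℕ, (∏ i ∈ Finset.range k, (α + i)) * z ^ k /
          ((∏ i ∈ Finset.range k, (β₁ + i)) * (∏ i ∈ Finset.range k, (β₂ + i)) *
            (k.factorial : ℝ))) +
      (∑' k : ℕ, (∏ i ∈ Finset.range k, (α + i)) * z ^ k /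
          ((∏ i ∈ Finset.range k, (β₁ + 1 + i)) * (∏ i ∈ Finset.range k, (β₂ + i)) *
            (k.factorial : ℝ))) ^ ((1 : ℝ) / β₁) := by
  rw [tsum_eq_hyp1F2, tsum_eq_hyp1F2]
  set G := hyp1F2 α (β₁ + 1) β₂ z
  set F := hyp1F2 α β₁ β₂ z
  have hα : 0 ≤ α := (hβ₂.trans_le hαβ).le
  have hG : 0 < G := hyp1F2_pos hα (by linarith) hβ₂ hz.le
  have hF : 0 < F := hyp1F2_pos hα hβ₁ hβ₂ hz.le
  have hamgm : 2 ≤ G / F + F / G := by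
    rw [div_add_div _ _ hF.ne' hG.ne', le_div_iff₀ (mul_pos hF hG)]
    nlinarith [sq_nonneg (G - F)]
  linarith [hyp1F2_div_le_rpow hβ₁ hβ₂ hαβ hz]

theorem wilker_1F2 (α β₁ β₂ : ℝ) (hα : 0 < α) (hβ₁ : 0 < β₁) (hβ₂ : 0 < β₂)
    (hαβ : β₂ ≤ α) (z : ℝ) (hz : 0 < z) :
    2 ≤ (∑' k : ℕ, (∏ i ∈ Finset.range k, (α + i)) * z ^ k /
          ((∏ i ∈ Finset.range k, (β₁ + 1 + i)) * (∏ i ∈ Finset.range k, (β₂ + i)) *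
            (k.factorial : ℝ))) /
        (∑' k : ℕ, (∏ i ∈ Finset.range k, (α + i)) * z ^ k /
          ((∏ i ∈ Finset.range k, (β₁ + i)) * (∏ i ∈ Finset.range k, (β₂ + i)) *
            (k.factorial : ℝ))) +
      (∑' k : ℕ, (∏ i ∈ Finset.range k, (α + i)) * z ^ k /
          ((∏ i ∈ Finset.range k, (β₁ + 1 + i)) * (∏ i ∈ Finset.range k, (β₂ + i)) *
            (k.factorial : ℝ))) ^ ((1 : ℝ) / β₁) :=
  wilker_1F2_general α β₁ β₂ hβ₁ hβ₂ hαβ z hz
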